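/- There exist pure submonoids C, D of ℤ² with cl(C ∩ D) ≠ cl(C) ∩ cl(D): namely, for C = {(i,j) ∈ ℕ₀² : i < j or i = j = 0} and D = {(i,j) ∈ ℕ₀² : i > j or i = j = 0}, one has cl(C ∩ D) = {(0,0)} while cl(C) ∩ cl(D) = {(k,k) : k ∈ ℕ₀}. -/

import Mathlib

/-- Canonical embedding of `ℤⁿ` into `ℝⁿ`. -/
def coeR {n : ℕ} (α : Fin n → ℤ) : Fin n → ℝ := fun i => (α i : ℝ)

/-- Convex hull in `ℝⁿ` of a subset of `ℤⁿ`. -/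
def convC {n : ℕ} (C : Set (Fin n → ℤ)) : Set (Fin n → ℝ) :=
  convexHull ℝ (coeR '' C)

/-- The closure `cl(C) = ℤⁿ ∩ topological-closure(conv C)` of a subset of `ℤⁿ`. -/
def intCl {n : ℕ} (C : Set (Fin n → ℤ)) : Set (Fin n → ℤ) :=
  {α | coeR α ∈ closure (convC C)}

/-- `C` is pure: `kα ∈ C` with `k ≥ 1` implies `α ∈ C`. -/
def IsPure {n : ℕ} (C : Set (Fin n → ℤ)) : Prop :=
  ∀ (k : ℕ) (α : Fin n → ℤ), 1 ≤ k → k • α ∈ C → α ∈ C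

/-- `C` is a submonoid of `(ℤⁿ, +)` (as a set). -/
def IsSubmonoidSet {n : ℕ} (C : Set (Fin n → ℤ)) : Prop :=
  (0 : Fin n → ℤ) ∈ C ∧ ∀ a ∈ C, ∀ b ∈ C, a + b ∈ C

/-- `M` is a finitely generated monoid (as a subset of `ℤⁿ`). -/
def IsFGSet {n : ℕ} (M : Set (Fin n → ℤ)) : Prop :=
  ∃ F : Finset (Fin n → ℤ),
    (AddSubmonoid.closure (F : Set (Fin n → ℤ)) : Set (Fin n → ℤ)) = M

/-- `C` is almost prismal: for every real subspace `V ⊆ ℝⁿ`, `cl(C ∩ V)` is finitely generated. -/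
def AlmostPrismal {n : ℕ} (C : Set (Fin n → ℤ)) : Prop :=
  ∀ V : Submodule ℝ (Fin n → ℝ), IsFGSet (intCl {α ∈ C | coeR α ∈ V})

/-- `C` is prismal: pure and almost prismal. -/
def Prismal {n : ℕ} (C : Set (Fin n → ℤ)) : Prop := IsPure C ∧ AlmostPrismal C

/-- The monoid `{(i,j) ∈ ℕ₀² : i < j or i = j = 0}`. -/
def Cex : Set (Fin 2 → ℤ) :=
  {p | 0 ≤ p 0 ∧ 0 ≤ p 1 ∧ (p 0 < p 1 ∨ (p 0 = 0 ∧ p 1 = 0))}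

/-- The monoid `{(i,j) ∈ ℕ₀² : i > j or i = j = 0}`. -/
def Dex : Set (Fin 2 → ℤ) :=
  {p | 0 ≤ p 0 ∧ 0 ≤ p 1 ∧ (p 1 < p 0 ∨ (p 0 = 0 ∧ p 1 = 0))}


/-!
Both `Cex` and `Dex` lie in ℕ₀² and meet only in `0`, so `cl(Cex ∩ Dex) = cl {0} = {0}`.
On the other hand `conv Cex` lies in the closed wedge `0 ≤ x₀ ≤ x₁` and `conv Dex` in
`0 ≤ x₁ ≤ x₀`, so `cl Cex ∩ cl Dex` lies on the nonnegative diagonal; conversely a diagonal point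
`p` is the limit of `((m + 1) • p + e) / (m + 1)`, which lies on the segment from `0` to a point
of `Cex` (take `e = (0, 1)`) resp. of `Dex` (take `e = (1, 0)`).
-/

open Filter Topology

section IntegerHull

variable {n : ℕ}

@[simp]
lemma coeR_zero : coeR (0 : Fin n → ℤ) = 0 := by
  funext i; simp [coeR]

@[simp]
lemma coeR_add (a b : Fin n → ℤ) : coeR (a + b) = coeR a + coeR b := by
  funext i; simp [coeR]

@[simp]
lemma coeR_nsmul (k : ℕ) (a : Fin n → ℤ) : coeR (k • a) = (k : ℝ) • coeR a := by
  funext i; simp [coeR]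

lemma coeR_injective : Function.Injective (coeR : (Fin n → ℤ) → Fin n → ℝ) :=
  fun a b h => funext fun i => by simpa [coeR] using congrFun h i

lemma intCl_singleton (a : Fin n → ℤ) : intCl {a} = {a} := by
  ext p
  simp [intCl, convC, coeR_injective.eq_iff]

lemma coeR_mem_of_mem_intCl {C : Set (Fin n → ℤ)} {K : Set (Fin n → ℝ)} (hK : Convex ℝ K)
    (hKc : IsClosed K) (hCK : ∀ p ∈ C, coeR p ∈ K) {p : Fin n → ℤ} (hp : p ∈ intCl C) :
    coeR p ∈ K :=
  closure_minimal (convexHull_min (Set.image_subset_iff.mpr hCK) hK) hKc hp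

lemma convex_wedge (a b : Fin n) : Convex ℝ {x : Fin n → ℝ | 0 ≤ x a ∧ x a ≤ x b} := by
  intro x hx y hy s t hs ht _
  simp only [Set.mem_ofPred_eq, Pi.add_apply, Pi.smul_apply, smul_eq_mul] at hx hy ⊢
  constructor <;> nlinarith

lemma isClosed_wedge (a b : Fin n) : IsClosed {x : Fin n → ℝ | 0 ≤ x a ∧ x a ≤ x b} :=
  (isClosed_le continuous_const (continuous_apply a)).inter
    (isClosed_le (continuous_apply a) (continuous_apply b))

lemma intCl_subset_wedge {C : Set (Fin n → ℤ)} (a b : Fin n)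
    (hC : ∀ p ∈ C, 0 ≤ p a ∧ p a ≤ p b) : intCl C ⊆ {p | 0 ≤ p a ∧ p a ≤ p b} := by
  intro p hp
  have hCK : ∀ q ∈ C, coeR q ∈ {x : Fin n → ℝ | 0 ≤ x a ∧ x a ≤ x b} := fun q hq => by
    simpa [coeR] using hC q hq
  simpa [coeR] using coeR_mem_of_mem_intCl (convex_wedge a b) (isClosed_wedge a b) hCK hp

lemma mem_intCl_of_forall_nsmul_add_mem {S : Set (Fin n → ℤ)} (h0 : 0 ∈ S)
    (p e : Fin n → ℤ) (hS : ∀ m : ℕ, (m + 1) • p + e ∈ S) : p ∈ intCl S := by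
  have hconv : Convex ℝ (convC S) := convex_convexHull ℝ _
  have hzero : (0 : Fin n → ℝ) ∈ convC S := by
    have h := subset_convexHull ℝ (coeR '' S) (Set.mem_image_of_mem coeR h0)
    rwa [coeR_zero] at h
  have hmem : ∀ m : ℕ, coeR p + (1 / ((m : ℝ) + 1)) • coeR e ∈ convC S := by
    intro m
    have hq : coeR ((m + 1) • p + e) ∈ convC S :=
      subset_convexHull ℝ _ (Set.mem_image_of_mem coeR (hS m))
    have ht : 1 / ((m : ℝ) + 1) ∈ Set.Icc (0 : ℝ) 1 :=
      ⟨by positivity, div_le_one_of_le₀ (by linarith [m.cast_nonneg (α := ℝ)]) (by positivity)⟩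
    convert hconv.smul_mem_of_zero_mem hzero hq ht using 1
    rw [coeR_add, coeR_nsmul, smul_add, smul_smul]
    push_cast
    field_simp
    simp
  have hlim : Tendsto (fun m : ℕ => coeR p + (1 / ((m : ℝ) + 1)) • coeR e) atTop
      (𝓝 (coeR p)) := by
    have h := ((tendsto_one_div_add_atTop_nhds_zero_nat (𝕜 := ℝ)).smul_const (coeR e)).const_add
      (coeR p)
    rwa [zero_smul, add_zero] at h
  exact mem_closure_of_tendsto hlim (Eventually.of_forall hmem)

end IntegerHull

lemma isSubmonoidSet_Cex : IsSubmonoidSet Cex := by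
  refine ⟨by simp [Cex], ?_⟩
  rintro a ⟨ha₀, ha₁, ha⟩ b ⟨hb₀, hb₁, hb⟩
  simp only [Cex, Set.mem_ofPred_eq, Pi.add_apply]
  omega

lemma isSubmonoidSet_Dex : IsSubmonoidSet Dex := by
  refine ⟨by simp [Dex], ?_⟩
  rintro a ⟨ha₀, ha₁, ha⟩ b ⟨hb₀, hb₁, hb⟩
  simp only [Dex, Set.mem_ofPred_eq, Pi.add_apply]
  omega

lemma isPure_Cex : IsPure Cex := by
  intro k α hk h
  have hk₀ : k ≠ 0 := by omega
  have hk : (0 : ℤ) < k := by exact_mod_cast hk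
  simpa [Cex, hk₀, mul_nonneg_iff_of_pos_left hk, mul_lt_mul_iff_right₀ hk] using h

lemma isPure_Dex : IsPure Dex := by
  intro k α hk h
  have hk₀ : k ≠ 0 := by omega
  have hk : (0 : ℤ) < k := by exact_mod_cast hk
  simpa [Dex, hk₀, mul_nonneg_iff_of_pos_left hk, mul_lt_mul_iff_right₀ hk] using h

lemma Cex_inter_Dex : Cex ∩ Dex = {0} := by
  ext p
  simp only [Cex, Dex, Set.mem_inter_iff, Set.mem_ofPred_eq, Set.mem_singleton_iff,
    funext_iff, Fin.forall_fin_two, Pi.zero_apply]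
  omega

lemma intCl_Cex_inter_intCl_Dex :
    intCl Cex ∩ intCl Dex = {p : Fin 2 → ℤ | 0 ≤ p 0 ∧ p 1 = p 0} := by
  apply Set.Subset.antisymm
  · rintro p ⟨hC, hD⟩
    obtain ⟨hp₀, hp₀₁⟩ := intCl_subset_wedge (C := Cex) 0 1 (fun q ⟨_, _, _⟩ => by omega) hC
    obtain ⟨-, hp₁₀⟩ := intCl_subset_wedge (C := Dex) 1 0 (fun q ⟨_, _, _⟩ => by omega) hD
    exact ⟨hp₀, le_antisymm hp₁₀ hp₀₁⟩
  · rintro p ⟨hp₀, hp₁⟩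
    constructor
    · refine mem_intCl_of_forall_nsmul_add_mem isSubmonoidSet_Cex.1 p ![0, 1] fun m => ?_
      simp only [Cex, Set.mem_ofPred_eq]
      refine ⟨?_, ?_, Or.inl ?_⟩ <;> simp [hp₁] <;> positivity
    · refine mem_intCl_of_forall_nsmul_add_mem isSubmonoidSet_Dex.1 p ![1, 0] fun m => ?_
      simp only [Dex, Set.mem_ofPred_eq]
      refine ⟨?_, ?_, Or.inl ?_⟩ <;> simp [hp₁] <;> positivity

/-- `Cex` and `Dex` are pure submonoids of `ℤ²` with
`cl(Cex ∩ Dex) = {0}` while `cl(Cex) ∩ cl(Dex) = {(k,k) : k ∈ ℕ₀}`; in particular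
`cl(Cex ∩ Dex) ≠ cl(Cex) ∩ cl(Dex)`. -/
theorem closure_inter_ne_inter_closure :
    IsSubmonoidSet Cex ∧ IsPure Cex ∧ IsSubmonoidSet Dex ∧ IsPure Dex ∧
    intCl (Cex ∩ Dex) = {0} ∧
    intCl Cex ∩ intCl Dex = {p : Fin 2 → ℤ | 0 ≤ p 0 ∧ p 1 = p 0} ∧
    intCl (Cex ∩ Dex) ≠ intCl Cex ∩ intCl Dex := by
  have hCD : intCl (Cex ∩ Dex) = {0} := by rw [Cex_inter_Dex, intCl_singleton]
  refine ⟨isSubmonoidSet_Cex, isPure_Cex, isSubmonoidSet_Dex, isPure_Dex, hCD,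
    intCl_Cex_inter_intCl_Dex, ?_⟩
  rw [hCD, intCl_Cex_inter_intCl_Dex]
  intro h
  have hone : (1 : Fin 2 → ℤ) ∈ ({0} : Set (Fin 2 → ℤ)) := h ▸ ⟨zero_le_one, rfl⟩
  exact one_ne_zero hone
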